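/- arXiv:2309.12384 — 3 statements merged into one kernel-verified Lean document; each statement's English description precedes it below -/
import Mathlib

section
/- Assume the mesh conditions k·|θ − x_p|·Δx ≤ σ² for every p ∈ S (the paper states this as Δx ≤ σ²/(kθ)) and λ·Δt·Î ≤ 1. Then the BTCS scheme is stable: every solution (Φ^q)_{q=0,…,T_max} satisfies max_{p∈P} |Φ^q_p| ≤ max_{p∈P} |Φ^0_p| for every q = 0,…,T_max. (Paper: stability part of the Proposition on the one-dimensional scheme.) -/
/-!
The scheme satisfies a discrete maximum principle. Under the first mesh condition the drift part
of `c_p, b_p` is dominated by the diffusion part, so both are nonnegative, and `c_p + b_p = a_p`.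
Evaluating row `p` at an index where `|Φ^{q+1}|` is maximal therefore gives
`(1 + a_p Δt) |Φ^{q+1}_p| ≤ a_p Δt |Φ^{q+1}_p| + |rhs|`. The second mesh condition makes the
right-hand side a convex combination of values of `Φ^q`, so `|Φ^{q+1}_p| ≤ max |Φ^q|`.
-/

lemma abs_one_sub_sum_mul_add_sum_mul_le {ι : Type*} (s : Finset ι) (w z : ι → ℝ) {y M : ℝ}
    (hw : ∀ i ∈ s, 0 ≤ w i) (hsum : ∑ i ∈ s, w i ≤ 1) (hy : |y| ≤ M)
    (hz : ∀ i ∈ s, |z i| ≤ M) :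
    |(1 - ∑ i ∈ s, w i) * y + ∑ i ∈ s, w i * z i| ≤ M := by
  have hsum_le : |∑ i ∈ s, w i * z i| ≤ (∑ i ∈ s, w i) * M := by
    rw [Finset.sum_mul]
    refine (Finset.abs_sum_le_sum_abs _ _).trans (Finset.sum_le_sum fun i hi => ?_)
    rw [abs_mul, abs_of_nonneg (hw i hi)]
    exact mul_le_mul_of_nonneg_left (hz i hi) (hw i hi)
  calc |(1 - ∑ i ∈ s, w i) * y + ∑ i ∈ s, w i * z i|
      ≤ (1 - ∑ i ∈ s, w i) * |y| + |∑ i ∈ s, w i * z i| := by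
        grw [abs_add_le, abs_mul, abs_of_nonneg (sub_nonneg.2 hsum)]
    _ ≤ (1 - ∑ i ∈ s, w i) * M + (∑ i ∈ s, w i) * M := by
        grw [hy, hsum_le]
        exact sub_nonneg.2 hsum
    _ = M := by ring

lemma abs_le_of_one_add_mul_eq {u l r c b R M : ℝ} (hc : 0 ≤ c) (hb : 0 ≤ b)
    (hrow : (1 + (c + b)) * u = c * l + b * r + R) (hl : |l| ≤ |u|) (hr : |r| ≤ |u|)
    (hR : |R| ≤ M) : |u| ≤ M := by
  have h : (1 + (c + b)) * |u| ≤ c * |u| + b * |u| + M := by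
    calc (1 + (c + b)) * |u| = |c * l + b * r + R| := by
          rw [← hrow, abs_mul, abs_of_nonneg (by linarith : 0 ≤ 1 + (c + b))]
      _ ≤ c * |l| + b * |r| + |R| := by
          grw [abs_add_le, abs_add_le, abs_mul, abs_mul, abs_of_nonneg hc, abs_of_nonneg hb]
      _ ≤ c * |u| + b * |u| + M := by grw [hl, hr, hR]
  linarith

lemma forall_abs_le_of_abs_argmax_le {α : Type*} {P : Finset α} {u : α → ℝ} {M : ℝ}
    (h : ∀ p₀ ∈ P, (∀ p ∈ P, |u p| ≤ |u p₀|) → |u p₀| ≤ M) : ∀ p ∈ P, |u p| ≤ M := by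
  intro p hp
  obtain ⟨p₀, hp₀, hmax⟩ := Finset.exists_max_image P (fun p => |u p|) ⟨p, hp⟩
  exact (hmax p hp).trans (h p₀ hp₀ hmax)

lemma abs_drift_le_diffusion {Δx σ k y : ℝ} (hΔx : 0 < Δx) (hk : 0 ≤ k)
    (h : k * |y| * Δx ≤ σ ^ 2) : |k * y / (2 * Δx)| ≤ σ ^ 2 / (2 * Δx ^ 2) := by
  rw [abs_div, abs_mul, abs_of_nonneg hk, abs_of_pos (by positivity : (0 : ℝ) < 2 * Δx),
    div_le_div_iff₀ (by positivity) (by positivity)]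
  nlinarith [mul_le_mul_of_nonneg_right h (by positivity : (0 : ℝ) ≤ 2 * Δx)]

lemma abs_jump_rhs_le (s : Finset ℤ) (f φ : ℤ → ℝ) (p : ℤ) {κ Δx M : ℝ} (hκ : 0 ≤ κ)
    (hΔx : 0 ≤ Δx) (hf : ∀ i ∈ s, 0 ≤ f i) (hκI : κ * ∑ i ∈ s, f i * Δx ≤ 1)
    (hφp : |φ p| ≤ M) (hφ : ∀ i ∈ s, |φ (p + i)| ≤ M) :
    |(1 - κ * ∑ i ∈ s, f i * Δx) * φ p + κ * ∑ i ∈ s, φ (p + i) * f i * Δx| ≤ M := by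
  have hrw : (1 - κ * ∑ i ∈ s, f i * Δx) * φ p + κ * ∑ i ∈ s, φ (p + i) * f i * Δx
      = (1 - ∑ i ∈ s, κ * (f i * Δx)) * φ p + ∑ i ∈ s, κ * (f i * Δx) * φ (p + i) := by
    rw [Finset.mul_sum, Finset.mul_sum]
    congr 1
    exact Finset.sum_congr rfl fun i _ => by ring
  rw [hrw]
  refine abs_one_sub_sum_mul_add_sum_mul_le s _ _ (fun i hi => ?_) ?_ hφp hφ
  · exact mul_nonneg hκ (mul_nonneg (hf i hi) hΔx)
  · rwa [← Finset.mul_sum]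

theorem stmt_8_general
    (Δx Δt σ k θ lam : ℝ)
    (hΔx : 0 < Δx) (hΔt : 0 < Δt) (hk : 0 ≤ k) (hlam : 0 < lam)
    (J N : ℕ)
    (fbar : ℤ → ℝ)
    (hfbar : ∀ i ∈ Finset.Icc (-(J / 2 : ℤ)) (J / 2 : ℤ), 0 ≤ fbar i)
    (Ihat : ℝ) (hIhat : Ihat = ∑ i ∈ Finset.Icc (-(J / 2 : ℤ)) (J / 2 : ℤ), fbar i * Δx)
    (P S : Finset ℤ)
    (hP : P = Finset.Icc 0 ((N : ℤ) - 1))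
    (hS : S ⊆ Finset.Icc 1 ((N : ℤ) - 2))
    (hSP : ∀ p ∈ S, ∀ i ∈ Finset.Icc (-(J / 2 : ℤ)) (J / 2 : ℤ), p + i ∈ P)
    (x : ℤ → ℝ)
    (c a b : ℤ → ℝ)
    (hc : ∀ p, c p = σ ^ 2 / (2 * Δx ^ 2) - k * (θ - x p) / (2 * Δx))
    (ha : ∀ p, a p = σ ^ 2 / Δx ^ 2)
    (hb : ∀ p, b p = σ ^ 2 / (2 * Δx ^ 2) + k * (θ - x p) / (2 * Δx))
    (Tmax : ℕ) (Φ : ℕ → ℤ → ℝ)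
    -- the implicit BTCS scheme, interior rows
    (hscheme : ∀ q < Tmax, ∀ p ∈ S,
      -(c p) * Δt * Φ (q + 1) (p - 1) + (1 + a p * Δt) * Φ (q + 1) p
          - b p * Δt * Φ (q + 1) (p + 1)
        = (1 - lam * Δt * Ihat) * Φ q p
          + lam * Δt *
            ∑ i ∈ Finset.Icc (-(J / 2 : ℤ)) (J / 2 : ℤ), Φ q (p + i) * fbar i * Δx)
    -- Dirichlet boundary rows
    (hbdry : ∀ q < Tmax, ∀ p ∈ P \ S, Φ (q + 1) p = Φ q p)
    -- mesh conditions
    (hmesh1 : ∀ p ∈ S, k * |θ - x p| * Δx ≤ σ ^ 2)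
    (hmesh2 : lam * Δt * Ihat ≤ 1) :
    ∀ q ≤ Tmax, ∀ M : ℝ, (∀ p ∈ P, |Φ 0 p| ≤ M) → ∀ p ∈ P, |Φ q p| ≤ M := by
  intro q hq M hM0
  induction q with
  | zero => exact hM0
  | succ q ih =>
    have IH := ih (Nat.le_of_succ_le hq)
    refine forall_abs_le_of_abs_argmax_le fun p hpP hmax => ?_
    by_cases hpS : p ∈ S
    · have hrange := Finset.mem_Icc.1 (hS hpS)
      have hdrift := abs_le.1 (abs_drift_le_diffusion hΔx hk (hmesh1 p hpS))
      have hc0 : 0 ≤ c p * Δt := mul_nonneg (by rw [hc]; linarith) hΔt.le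
      have hb0 : 0 ≤ b p * Δt := mul_nonneg (by rw [hb]; linarith) hΔt.le
      have hcb : c p + b p = a p := by rw [hc, hb, ha]; field_simp; ring
      refine abs_le_of_one_add_mul_eq (l := Φ (q + 1) (p - 1)) (r := Φ (q + 1) (p + 1)) hc0 hb0 ?_
        (hmax _ (by rw [hP, Finset.mem_Icc]; omega)) (hmax _ (by rw [hP, Finset.mem_Icc]; omega))
        (abs_jump_rhs_le _ fbar (Φ q) p (by positivity) hΔx.le hfbar
          (hIhat ▸ hmesh2) (IH p hpP) fun i hi => IH _ (hSP p hpS i hi))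
      rw [← hIhat]
      linear_combination hscheme q hq p hpS + Δt * Φ (q + 1) p * hcb
    · rw [hbdry q hq p (Finset.mem_sdiff.2 ⟨hpP, hpS⟩)]
      exact IH p hpP

/-- Stability of the implicit BTCS scheme for the one-dimensional
Lévy-driven OU PIDE: under the mesh conditions `k·|θ - x_p|·Δx ≤ σ²` (for `p` in the
interior index set `S`) and `λ·Δt·Î ≤ 1`, every solution of the scheme satisfies
`max_{p ∈ P} |Φ^q_p| ≤ max_{p ∈ P} |Φ^0_p|` for every `q = 0, …, Tmax`. -/
theorem stmt_8
    (Δx Δt σ k θ lam x₀ : ℝ)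
    (hΔx : 0 < Δx) (hΔt : 0 < Δt) (hσ : 0 < σ) (hk : 0 ≤ k) (hlam : 0 < lam)
    (J N : ℕ) (hJ : Even J)
    (fbar : ℤ → ℝ)
    (hfbar : ∀ i ∈ Finset.Icc (-(J / 2 : ℤ)) (J / 2 : ℤ), 0 ≤ fbar i)
    (Ihat : ℝ) (hIhat : Ihat = ∑ i ∈ Finset.Icc (-(J / 2 : ℤ)) (J / 2 : ℤ), fbar i * Δx)
    (P S : Finset ℤ)
    (hP : P = Finset.Icc 0 ((N : ℤ) - 1))
    (hS : S ⊆ Finset.Icc 1 ((N : ℤ) - 2))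
    (hSP : ∀ p ∈ S, ∀ i ∈ Finset.Icc (-(J / 2 : ℤ)) (J / 2 : ℤ), p + i ∈ P)
    (x : ℤ → ℝ) (hx : ∀ p, x p = x₀ + (p : ℝ) * Δx)
    (c a b : ℤ → ℝ)
    (hc : ∀ p, c p = σ ^ 2 / (2 * Δx ^ 2) - k * (θ - x p) / (2 * Δx))
    (ha : ∀ p, a p = σ ^ 2 / Δx ^ 2)
    (hb : ∀ p, b p = σ ^ 2 / (2 * Δx ^ 2) + k * (θ - x p) / (2 * Δx))
    (Tmax : ℕ) (Φ : ℕ → ℤ → ℝ)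
    -- the implicit BTCS scheme, interior rows
    (hscheme : ∀ q < Tmax, ∀ p ∈ S,
      -(c p) * Δt * Φ (q + 1) (p - 1) + (1 + a p * Δt) * Φ (q + 1) p
          - b p * Δt * Φ (q + 1) (p + 1)
        = (1 - lam * Δt * Ihat) * Φ q p
          + lam * Δt *
            ∑ i ∈ Finset.Icc (-(J / 2 : ℤ)) (J / 2 : ℤ), Φ q (p + i) * fbar i * Δx)
    -- Dirichlet boundary rows
    (hbdry : ∀ q < Tmax, ∀ p ∈ P \ S, Φ (q + 1) p = Φ q p)
    -- mesh conditions
    (hmesh1 : ∀ p ∈ S, k * |θ - x p| * Δx ≤ σ ^ 2)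
    (hmesh2 : lam * Δt * Ihat ≤ 1) :
    ∀ q ≤ Tmax, ∀ M : ℝ, (∀ p ∈ P, |Φ 0 p| ≤ M) → ∀ p ∈ P, |Φ q p| ≤ M :=
  stmt_8_general Δx Δt σ k θ lam hΔx hΔt hk hlam J N fbar hfbar Ihat hIhat P S hP hS hSP x c a b hc
    ha hb Tmax Φ hscheme hbdry hmesh1 hmesh2
end

section
/- Assume the mesh conditions k·|θ − x_p|·Δx ≤ σ² for every p ∈ S (the paper states this as Δx ≤ σ²/(kθ)) and λ·Δt·Î ≤ 1. Then the BTCS scheme is monotone (discrete comparison principle): if (Φ^q) and (Φ̃^q) are two solutions of the scheme with Φ^0_p ≥ Φ̃^0_p for all p ∈ P, then Φ^q_p ≥ Φ̃^q_p for all p ∈ P and all q = 0,…,T_max. (Paper: monotonicity part of the Proposition on the one-dimensional scheme.) -/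
/-!
The difference of two solutions again solves the (linear) scheme, so it suffices to show that
the scheme preserves nonnegativity. The explicit part of a step has nonnegative weights
`1 - λΔtÎ` and `λΔt f̄ᵢΔx`, and the implicit part is a three-point operator
`w ↦ w + C (w - w₋) + B (w - w₊)` with `C = cΔt`, `B = bΔt` nonnegative by the mesh
condition; at a minimum of `w` the two differences are nonpositive, so a nonnegative right-hand
side forces the minimum itself to be nonnegative.
-/

open Finset

lemma three_point_min_principle {P S : Finset ℤ} {C B w : ℤ → ℝ}
    (hnbr : ∀ p ∈ S, p - 1 ∈ P ∧ p + 1 ∈ P)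
    (hC : ∀ p ∈ S, 0 ≤ C p) (hB : ∀ p ∈ S, 0 ≤ B p)
    (hrow : ∀ p ∈ S, 0 ≤ w p + C p * (w p - w (p - 1)) + B p * (w p - w (p + 1)))
    (hbdry : ∀ p ∈ P \ S, 0 ≤ w p) :
    ∀ p ∈ P, 0 ≤ w p := by
  intro p hp
  obtain ⟨m, hmP, hmin⟩ := exists_min_image P w ⟨p, hp⟩
  suffices 0 ≤ w m from this.trans (hmin p hp)
  by_cases hmS : m ∈ S
  · have hleft : C m * (w m - w (m - 1)) ≤ 0 :=
      mul_nonpos_of_nonneg_of_nonpos (hC m hmS) (sub_nonpos.2 (hmin _ (hnbr m hmS).1))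
    have hright : B m * (w m - w (m + 1)) ≤ 0 :=
      mul_nonpos_of_nonneg_of_nonpos (hB m hmS) (sub_nonpos.2 (hmin _ (hnbr m hmS).2))
    linarith [hrow m hmS]
  · exact hbdry m (mem_sdiff.2 ⟨hmP, hmS⟩)

lemma centered_coeffs_nonneg {s d h : ℝ} (hh : 0 < h) (hd : |d| * h ≤ s) :
    0 ≤ s / (2 * h ^ 2) - d / (2 * h) ∧ 0 ≤ s / (2 * h ^ 2) + d / (2 * h) := by
  have hsplit : ∀ e : ℝ, s / (2 * h ^ 2) + e / (2 * h) = (s + e * h) / (2 * h ^ 2) := fun e => by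
    field_simp
  have hpos : d * h ≤ s := (mul_le_mul_of_nonneg_right (le_abs_self d) hh.le).trans hd
  have hneg : -d * h ≤ s := (mul_le_mul_of_nonneg_right (neg_le_abs d) hh.le).trans hd
  constructor
  · rw [sub_eq_add_neg, ← neg_div, hsplit]
    exact div_nonneg (by linarith) (by positivity)
  · rw [hsplit]
    exact div_nonneg (by linarith) (by positivity)

section BTCS

variable {Δt lam Ihat Δx : ℝ} {I P S : Finset ℤ} {fbar c a b : ℤ → ℝ}

lemma btcs_step_nonneg {u w : ℤ → ℝ}
    (hΔt : 0 ≤ Δt) (hlam : 0 ≤ lam) (hΔx : 0 ≤ Δx) (hfbar : ∀ i ∈ I, 0 ≤ fbar i)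
    (hmesh : lam * Δt * Ihat ≤ 1)
    (hSsubP : S ⊆ P) (hnbr : ∀ p ∈ S, p - 1 ∈ P ∧ p + 1 ∈ P)
    (hjumpP : ∀ p ∈ S, ∀ i ∈ I, p + i ∈ P)
    (hc : ∀ p ∈ S, 0 ≤ c p) (hb : ∀ p ∈ S, 0 ≤ b p) (ha : ∀ p ∈ S, a p = c p + b p)
    (hrow : ∀ p ∈ S,
      -(c p) * Δt * w (p - 1) + (1 + a p * Δt) * w p - b p * Δt * w (p + 1)
        = (1 - lam * Δt * Ihat) * u p + lam * Δt * ∑ i ∈ I, u (p + i) * fbar i * Δx)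
    (hbdry : ∀ p ∈ P \ S, w p = u p) (hu : ∀ p ∈ P, 0 ≤ u p) :
    ∀ p ∈ P, 0 ≤ w p := by
  refine three_point_min_principle (C := fun p => c p * Δt) (B := fun p => b p * Δt) hnbr
    (fun p hp => mul_nonneg (hc p hp) hΔt) (fun p hp => mul_nonneg (hb p hp) hΔt)
    (fun p hp => ?_) (fun p hp => hbdry p hp ▸ hu p (mem_sdiff.1 hp).1)
  have hjump : 0 ≤ ∑ i ∈ I, u (p + i) * fbar i * Δx :=
    sum_nonneg fun i hi => mul_nonneg (mul_nonneg (hu _ (hjumpP p hp i hi)) (hfbar i hi)) hΔx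
  have hexplicit : 0 ≤ (1 - lam * Δt * Ihat) * u p
      + lam * Δt * ∑ i ∈ I, u (p + i) * fbar i * Δx :=
    add_nonneg (mul_nonneg (sub_nonneg.2 hmesh) (hu p (hSsubP hp)))
      (mul_nonneg (mul_nonneg hlam hΔt) hjump)
  calc 0 ≤ _ := hexplicit
    _ = _ := (hrow p hp).symm
    _ = _ := by rw [ha p hp]; ring

lemma btcs_nonneg {Tmax : ℕ} {Ψ : ℕ → ℤ → ℝ}
    (hΔt : 0 ≤ Δt) (hlam : 0 ≤ lam) (hΔx : 0 ≤ Δx) (hfbar : ∀ i ∈ I, 0 ≤ fbar i)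
    (hmesh : lam * Δt * Ihat ≤ 1)
    (hSsubP : S ⊆ P) (hnbr : ∀ p ∈ S, p - 1 ∈ P ∧ p + 1 ∈ P)
    (hjumpP : ∀ p ∈ S, ∀ i ∈ I, p + i ∈ P)
    (hc : ∀ p ∈ S, 0 ≤ c p) (hb : ∀ p ∈ S, 0 ≤ b p) (ha : ∀ p ∈ S, a p = c p + b p)
    (hscheme : ∀ q < Tmax, ∀ p ∈ S,
      -(c p) * Δt * Ψ (q + 1) (p - 1) + (1 + a p * Δt) * Ψ (q + 1) p
          - b p * Δt * Ψ (q + 1) (p + 1)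
        = (1 - lam * Δt * Ihat) * Ψ q p + lam * Δt * ∑ i ∈ I, Ψ q (p + i) * fbar i * Δx)
    (hbdry : ∀ q < Tmax, ∀ p ∈ P \ S, Ψ (q + 1) p = Ψ q p) (hinit : ∀ p ∈ P, 0 ≤ Ψ 0 p) :
    ∀ q ≤ Tmax, ∀ p ∈ P, 0 ≤ Ψ q p := by
  intro q
  induction q with
  | zero => exact fun _ => hinit
  | succ q ih =>
    intro hq
    exact btcs_step_nonneg hΔt hlam hΔx hfbar hmesh hSsubP hnbr hjumpP hc hb ha (hscheme q hq)
      (hbdry q hq) (ih (Nat.le_of_succ_le hq))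

end BTCS

theorem stmt_9_general
    (Δx Δt σ k θ lam : ℝ)
    (hΔx : 0 < Δx) (hΔt : 0 < Δt) (hk : 0 ≤ k) (hlam : 0 < lam)
    (J N : ℕ)
    (fbar : ℤ → ℝ)
    (hfbar : ∀ i ∈ Finset.Icc (-(J / 2 : ℤ)) (J / 2 : ℤ), 0 ≤ fbar i)
    (Ihat : ℝ)
    (P S : Finset ℤ)
    (hP : P = Finset.Icc 0 ((N : ℤ) - 1))
    (hS : S ⊆ Finset.Icc 1 ((N : ℤ) - 2))
    (hSP : ∀ p ∈ S, ∀ i ∈ Finset.Icc (-(J / 2 : ℤ)) (J / 2 : ℤ), p + i ∈ P)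
    (x : ℤ → ℝ)
    (c a b : ℤ → ℝ)
    (hc : ∀ p, c p = σ ^ 2 / (2 * Δx ^ 2) - k * (θ - x p) / (2 * Δx))
    (ha : ∀ p, a p = σ ^ 2 / Δx ^ 2)
    (hb : ∀ p, b p = σ ^ 2 / (2 * Δx ^ 2) + k * (θ - x p) / (2 * Δx))
    (Tmax : ℕ) (Φ Φt : ℕ → ℤ → ℝ)
    -- the implicit BTCS scheme for Φ, interior rows
    (hscheme : ∀ q < Tmax, ∀ p ∈ S,
      -(c p) * Δt * Φ (q + 1) (p - 1) + (1 + a p * Δt) * Φ (q + 1) p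
          - b p * Δt * Φ (q + 1) (p + 1)
        = (1 - lam * Δt * Ihat) * Φ q p
          + lam * Δt *
            ∑ i ∈ Finset.Icc (-(J / 2 : ℤ)) (J / 2 : ℤ), Φ q (p + i) * fbar i * Δx)
    (hbdry : ∀ q < Tmax, ∀ p ∈ P \ S, Φ (q + 1) p = Φ q p)
    -- the implicit BTCS scheme for Φ̃, interior rows
    (hscheme' : ∀ q < Tmax, ∀ p ∈ S,
      -(c p) * Δt * Φt (q + 1) (p - 1) + (1 + a p * Δt) * Φt (q + 1) p
          - b p * Δt * Φt (q + 1) (p + 1)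
        = (1 - lam * Δt * Ihat) * Φt q p
          + lam * Δt *
            ∑ i ∈ Finset.Icc (-(J / 2 : ℤ)) (J / 2 : ℤ), Φt q (p + i) * fbar i * Δx)
    (hbdry' : ∀ q < Tmax, ∀ p ∈ P \ S, Φt (q + 1) p = Φt q p)
    -- mesh conditions
    (hmesh1 : ∀ p ∈ S, k * |θ - x p| * Δx ≤ σ ^ 2)
    (hmesh2 : lam * Δt * Ihat ≤ 1)
    -- comparison of initial data
    (hinit : ∀ p ∈ P, Φt 0 p ≤ Φ 0 p) :
    ∀ q ≤ Tmax, ∀ p ∈ P, Φt q p ≤ Φ q p := by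
  have hSsubP : S ⊆ P := fun p hp => by
    have := mem_Icc.1 (hS hp); rw [hP, mem_Icc]; omega
  have hnbr : ∀ p ∈ S, p - 1 ∈ P ∧ p + 1 ∈ P := fun p hp => by
    have := mem_Icc.1 (hS hp); simp only [hP, mem_Icc]; omega
  have hcoeffs : ∀ p ∈ S, 0 ≤ c p ∧ 0 ≤ b p := fun p hp => by
    rw [hc, hb]
    refine centered_coeffs_nonneg hΔx ?_
    rw [abs_mul, abs_of_nonneg hk]
    exact hmesh1 p hp
  have hdiff := btcs_nonneg (c := c) (a := a) (b := b)
    (Ψ := fun q p => Φ q p - Φt q p) hΔt.le hlam.le hΔx.le hfbar hmesh2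
    hSsubP hnbr hSP (fun p hp => (hcoeffs p hp).1) (fun p hp => (hcoeffs p hp).2)
    (fun p _ => by rw [ha, hb, hc]; ring)
    (fun q hq p hp => by
      simp only [sub_mul, sum_sub_distrib]
      linear_combination hscheme q hq p hp - hscheme' q hq p hp)
    (fun q hq p hp => by simp only [hbdry q hq p hp, hbdry' q hq p hp])
    (fun p hp => sub_nonneg.2 (hinit p hp))
  exact fun q hq p hp => sub_nonneg.1 (hdiff q hq p hp)

/-- Monotonicity (discrete comparison principle) of the implicit BTCS
scheme for the one-dimensional Lévy-driven OU PIDE: under the mesh conditions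
`k·|θ - x_p|·Δx ≤ σ²` (for `p` in the interior index set `S`) and `λ·Δt·Î ≤ 1`,
if two solutions satisfy `Φ^0 ≥ Φ̃^0` on `P` then `Φ^q ≥ Φ̃^q` on `P` for all
`q = 0, …, Tmax`. -/
theorem stmt_9
    (Δx Δt σ k θ lam x₀ : ℝ)
    (hΔx : 0 < Δx) (hΔt : 0 < Δt) (hσ : 0 < σ) (hk : 0 ≤ k) (hlam : 0 < lam)
    (J N : ℕ) (hJ : Even J)
    (fbar : ℤ → ℝ)
    (hfbar : ∀ i ∈ Finset.Icc (-(J / 2 : ℤ)) (J / 2 : ℤ), 0 ≤ fbar i)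
    (Ihat : ℝ) (hIhat : Ihat = ∑ i ∈ Finset.Icc (-(J / 2 : ℤ)) (J / 2 : ℤ), fbar i * Δx)
    (P S : Finset ℤ)
    (hP : P = Finset.Icc 0 ((N : ℤ) - 1))
    (hS : S ⊆ Finset.Icc 1 ((N : ℤ) - 2))
    (hSP : ∀ p ∈ S, ∀ i ∈ Finset.Icc (-(J / 2 : ℤ)) (J / 2 : ℤ), p + i ∈ P)
    (x : ℤ → ℝ) (hx : ∀ p, x p = x₀ + (p : ℝ) * Δx)
    (c a b : ℤ → ℝ)
    (hc : ∀ p, c p = σ ^ 2 / (2 * Δx ^ 2) - k * (θ - x p) / (2 * Δx))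
    (ha : ∀ p, a p = σ ^ 2 / Δx ^ 2)
    (hb : ∀ p, b p = σ ^ 2 / (2 * Δx ^ 2) + k * (θ - x p) / (2 * Δx))
    (Tmax : ℕ) (Φ Φt : ℕ → ℤ → ℝ)
    -- the implicit BTCS scheme for Φ, interior rows
    (hscheme : ∀ q < Tmax, ∀ p ∈ S,
      -(c p) * Δt * Φ (q + 1) (p - 1) + (1 + a p * Δt) * Φ (q + 1) p
          - b p * Δt * Φ (q + 1) (p + 1)
        = (1 - lam * Δt * Ihat) * Φ q p
          + lam * Δt *
            ∑ i ∈ Finset.Icc (-(J / 2 : ℤ)) (J / 2 : ℤ), Φ q (p + i) * fbar i * Δx)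
    (hbdry : ∀ q < Tmax, ∀ p ∈ P \ S, Φ (q + 1) p = Φ q p)
    -- the implicit BTCS scheme for Φ̃, interior rows
    (hscheme' : ∀ q < Tmax, ∀ p ∈ S,
      -(c p) * Δt * Φt (q + 1) (p - 1) + (1 + a p * Δt) * Φt (q + 1) p
          - b p * Δt * Φt (q + 1) (p + 1)
        = (1 - lam * Δt * Ihat) * Φt q p
          + lam * Δt *
            ∑ i ∈ Finset.Icc (-(J / 2 : ℤ)) (J / 2 : ℤ), Φt q (p + i) * fbar i * Δx)
    (hbdry' : ∀ q < Tmax, ∀ p ∈ P \ S, Φt (q + 1) p = Φt q p)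
    -- mesh conditions
    (hmesh1 : ∀ p ∈ S, k * |θ - x p| * Δx ≤ σ ^ 2)
    (hmesh2 : lam * Δt * Ihat ≤ 1)
    -- comparison of initial data
    (hinit : ∀ p ∈ P, Φt 0 p ≤ Φ 0 p) :
    ∀ q ≤ Tmax, ∀ p ∈ P, Φt q p ≤ Φ q p :=
  stmt_9_general Δx Δt σ k θ lam hΔx hΔt hk hlam J N fbar hfbar Ihat P S hP hS hSP x c a b hc ha hb
    Tmax Φ Φt hscheme hbdry hscheme' hbdry' hmesh1 hmesh2 hinit
end

section
/- Assume λ·Δt·Î ≤ 1. Then, with no condition on the spatial mesh sizes Δx and Δy (the paper calls the scheme 'unconditionally' stable), the upwinded stochastic-volatility scheme is stable: every solution (Φ^q) satisfies max_{p∈P, 0≤j≤V−1} |Φ^q_{p,j}| ≤ max_{p∈P, 0≤j≤V−1} |Φ^0_{p,j}| for every q = 0,…,T_max. (Paper: stability part of the Lemma on the stochastic volatility scheme; note all spatial coefficients are nonnegative by construction of the upwind discretization.) -/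
/-!
The scheme obeys a discrete maximum principle. Let `(p, j)` be a point where `|Φ^{q+1}|`
attains its maximum `W`. On a boundary row `Φ^{q+1}_{p,j} = Φ^q_{p,j}`. On an interior row
the upwind coefficients `c, b, e, f` are nonnegative with `c + b + e + f ≤ a`, and the
explicit jump part is a convex combination of values of `Φ^q` once `λΔtÎ ≤ 1`; hence
`(1 + aΔt) W ≤ max |Φ^q| + aΔt W`, i.e. `W ≤ max |Φ^q|`, whatever `Δx` and `Δy` are.
-/

open Finset

theorem Finset.forall_le_of_max_le {ι α : Type*} [LinearOrder α] {s : Finset ι}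
    {g : ι → α} {M : α} (h : ∀ z ∈ s, (∀ z' ∈ s, g z' ≤ g z) → g z ≤ M) :
    ∀ z ∈ s, g z ≤ M := by
  intro z hz
  obtain ⟨z₀, hz₀, hmax⟩ := s.exists_max_image g ⟨z, hz⟩
  exact (hmax z hz).trans (h z₀ hz₀ hmax)

theorem abs_one_sub_mul_sum_mul_add_le {ι : Type*} (s : Finset ι) {w v : ι → ℝ} {v₀ t M : ℝ}
    (ht : 0 ≤ t) (hw : ∀ i ∈ s, 0 ≤ w i) (hcfl : t * ∑ i ∈ s, w i ≤ 1)
    (hv₀ : |v₀| ≤ M) (hv : ∀ i ∈ s, |v i| ≤ M) :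
    |(1 - t * ∑ i ∈ s, w i) * v₀ + t * ∑ i ∈ s, v i * w i| ≤ M := by
  have hsum : |∑ i ∈ s, v i * w i| ≤ M * ∑ i ∈ s, w i := by
    rw [mul_sum]
    refine (abs_sum_le_sum_abs _ _).trans (sum_le_sum fun i hi => ?_)
    rw [abs_mul, abs_of_nonneg (hw i hi)]
    exact mul_le_mul_of_nonneg_right (hv i hi) (hw i hi)
  have hcfl' : 0 ≤ 1 - t * ∑ i ∈ s, w i := sub_nonneg.2 hcfl
  calc _ ≤ |(1 - t * ∑ i ∈ s, w i) * v₀| + |t * ∑ i ∈ s, v i * w i| := abs_add_le _ _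
    _ = (1 - t * ∑ i ∈ s, w i) * |v₀| + t * |∑ i ∈ s, v i * w i| := by
      rw [abs_mul, abs_mul, abs_of_nonneg hcfl', abs_of_nonneg ht]
    _ ≤ (1 - t * ∑ i ∈ s, w i) * M + t * (M * ∑ i ∈ s, w i) := by gcongr
    _ = M := by ring

theorem abs_le_of_dominant_row {u r v₁ v₂ v₃ v₄ c b e f a M : ℝ}
    (hc : 0 ≤ c) (hb : 0 ≤ b) (he : 0 ≤ e) (hf : 0 ≤ f) (hdom : c + b + e + f ≤ a)
    (h₁ : |v₁| ≤ |u|) (h₂ : |v₂| ≤ |u|) (h₃ : |v₃| ≤ |u| ∨ e = 0) (h₄ : |v₄| ≤ |u| ∨ f = 0)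
    (hr : |r| ≤ M) (hrow : (1 + a) * u - c * v₁ - b * v₂ - e * v₃ - f * v₄ = r) :
    |u| ≤ M := by
  have weighted : ∀ {d v : ℝ}, 0 ≤ d → |v| ≤ |u| ∨ d = 0 → |d * v| ≤ d * |u| := by
    rintro d v hd (hv | rfl)
    · rw [abs_mul, abs_of_nonneg hd]
      exact mul_le_mul_of_nonneg_left hv hd
    · simp
  have hcv := abs_le.1 (weighted hc (.inl h₁))
  have hbv := abs_le.1 (weighted hb (.inl h₂))
  have hev := abs_le.1 (weighted he h₃)
  have hfv := abs_le.1 (weighted hf h₄)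
  have hr' := abs_le.1 hr
  have ha : 0 ≤ 1 + a := by linarith
  have hbound : (1 + a) * |u| ≤ M + (c + b + e + f) * |u| := by
    rw [← abs_of_nonneg ha, ← abs_mul]
    exact abs_le.2 ⟨by linarith, by linarith⟩
  linarith [mul_le_mul_of_nonneg_right hdom (abs_nonneg u)]

theorem abs_le_of_upwind_step {P S Vset K : Finset ℤ} {c a b e f : ℤ → ℤ → ℝ} {w : ℤ → ℝ}
    {Δt lam M : ℝ} {u v : ℤ → ℤ → ℝ} (hΔt : 0 ≤ Δt) (hlam : 0 ≤ lam)
    (hw : ∀ i ∈ K, 0 ≤ w i) (hcfl : lam * Δt * ∑ i ∈ K, w i ≤ 1)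
    (hSK : ∀ p ∈ S, ∀ i ∈ K, p + i ∈ P) (hnbr : ∀ p ∈ S, p - 1 ∈ P ∧ p + 1 ∈ P)
    (hc : ∀ p ∈ S, ∀ j ∈ Vset, 0 ≤ c p j) (hb : ∀ p ∈ S, ∀ j ∈ Vset, 0 ≤ b p j)
    (he : ∀ p ∈ S, ∀ j ∈ Vset, 0 ≤ e p j) (hf : ∀ p ∈ S, ∀ j ∈ Vset, 0 ≤ f p j)
    (hdom : ∀ p ∈ S, ∀ j ∈ Vset, c p j + b p j + e p j + f p j ≤ a p j)
    (he₀ : ∀ p ∈ S, ∀ j ∈ Vset, j - 1 ∉ Vset → e p j = 0)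
    (hf₀ : ∀ p ∈ S, ∀ j ∈ Vset, j + 1 ∉ Vset → f p j = 0)
    (hrow : ∀ p ∈ S, ∀ j ∈ Vset,
      -(c p j) * Δt * u (p - 1) j + (1 + a p j * Δt) * u p j - b p j * Δt * u (p + 1) j
          - e p j * Δt * u p (j - 1) - f p j * Δt * u p (j + 1)
        = (1 - lam * Δt * ∑ i ∈ K, w i) * v p j + lam * Δt * ∑ i ∈ K, v (p + i) j * w i)
    (hbdry : ∀ p ∈ P \ S, ∀ j ∈ Vset, u p j = v p j)
    (hv : ∀ p ∈ P, ∀ j ∈ Vset, |v p j| ≤ M) :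
    ∀ p ∈ P, ∀ j ∈ Vset, |u p j| ≤ M := by
  suffices ∀ z ∈ P ×ˢ Vset, |u z.1 z.2| ≤ M from
    fun p hp j hj => this (p, j) (mem_product.2 ⟨hp, hj⟩)
  refine forall_le_of_max_le fun ⟨p, j⟩ hz hmax => ?_
  obtain ⟨hp, hj⟩ := mem_product.1 hz
  dsimp only at hp hj hmax ⊢
  have hmax' : ∀ p' ∈ P, ∀ j' ∈ Vset, |u p' j'| ≤ |u p j| :=
    fun p' hp' j' hj' => hmax (p', j') (mem_product.2 ⟨hp', hj'⟩)
  by_cases hpS : p ∈ S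
  · have hdown : |u p (j - 1)| ≤ |u p j| ∨ e p j * Δt = 0 := by
      by_cases hj' : j - 1 ∈ Vset
      · exact .inl (hmax' p hp _ hj')
      · simp [he₀ p hpS j hj hj']
    have hup : |u p (j + 1)| ≤ |u p j| ∨ f p j * Δt = 0 := by
      by_cases hj' : j + 1 ∈ Vset
      · exact .inl (hmax' p hp _ hj')
      · simp [hf₀ p hpS j hj hj']
    have hr := abs_one_sub_mul_sum_mul_add_le K (mul_nonneg hlam hΔt) hw hcfl (hv p hp j hj)
      fun i hi => hv _ (hSK p hpS i hi) j hj
    have hdomΔt : c p j * Δt + b p j * Δt + e p j * Δt + f p j * Δt ≤ a p j * Δt := by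
      simpa only [← add_mul] using mul_le_mul_of_nonneg_right (hdom p hpS j hj) hΔt
    exact abs_le_of_dominant_row (mul_nonneg (hc p hpS j hj) hΔt) (mul_nonneg (hb p hpS j hj) hΔt)
      (mul_nonneg (he p hpS j hj) hΔt) (mul_nonneg (hf p hpS j hj) hΔt) hdomΔt
      (hmax' _ (hnbr p hpS).1 j hj) (hmax' _ (hnbr p hpS).2 j hj) hdown hup hr
      (by linear_combination hrow p hpS j hj)
  · simpa only [hbdry p (mem_sdiff.2 ⟨hp, hpS⟩) j hj] using hv p hp j hj

section UpwindSplit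

variable {h z : ℝ} {p q : Prop} [Decidable p] [Decidable q]

theorem ite_div_nonneg_of_pos (hh : 0 ≤ h) (hp : p → 0 < z) : 0 ≤ if p then z / h else 0 := by
  split_ifs with hp'
  exacts [div_nonneg (hp hp').le hh, le_rfl]

theorem ite_div_nonpos_of_neg (hh : 0 ≤ h) (hq : q → z < 0) : (if q then z / h else 0) ≤ 0 := by
  split_ifs with hq'
  exacts [div_nonpos_of_nonpos_of_nonneg (hq hq').le hh, le_rfl]

theorem ite_div_sub_ite_div_le_abs_div (hh : 0 ≤ h) (hp : p → 0 < z) (hq : q → z < 0) :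
    (if p then z / h else 0) - (if q then z / h else 0) ≤ |z| / h := by
  have habs : 0 ≤ |z| / h := div_nonneg (abs_nonneg z) hh
  split_ifs with hp' hq' hq'
  · exact absurd ((hp hp').trans (hq hq')) (lt_irrefl 0)
  · rw [abs_of_pos (hp hp')]; linarith
  · rw [abs_of_neg (hq hq'), neg_div]; linarith
  · linarith

end UpwindSplit

theorem upwind_x_coeffs_nonneg_sum_le {Δx Y z c b : ℝ} (hΔx : 0 < Δx) (hY : 0 ≤ Y)
    (hc : c = Y / (2 * Δx ^ 2) - (if z < 0 then z / Δx else 0))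
    (hb : b = Y / (2 * Δx ^ 2) + (if 0 < z then z / Δx else 0)) :
    0 ≤ c ∧ 0 ≤ b ∧ c + b ≤ Y / Δx ^ 2 + |z| / Δx := by
  have hY' : 0 ≤ Y / (2 * Δx ^ 2) := by positivity
  have hneg := ite_div_nonpos_of_neg (z := z) hΔx.le id
  have hpos := ite_div_nonneg_of_pos (z := z) hΔx.le id
  have hsplit := ite_div_sub_ite_div_le_abs_div (z := z) hΔx.le id id
  refine ⟨by linarith, by linarith, ?_⟩
  rw [hc, hb]
  linarith [show Y / (2 * Δx ^ 2) + Y / (2 * Δx ^ 2) = Y / Δx ^ 2 by ring]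

theorem upwind_y_coeffs_nonneg_sum_le {Δy ξ Y w e f : ℝ} {j top : ℤ} (hΔy : 0 < Δy) (hY : 0 ≤ Y)
    (he : e = (if j ≠ top then ξ ^ 2 * Y / (2 * Δy ^ 2) else 0)
        + (if j = top then ξ ^ 2 * Y / Δy ^ 2 else 0)
        - (if w < 0 ∧ 0 < j ∧ j < top then w / Δy else 0))
    (hf : f = (if j ≠ top then ξ ^ 2 * Y / (2 * Δy ^ 2) else 0)
        + (if 0 < w ∧ j ≠ top then w / Δy else 0)) :
    0 ≤ e ∧ 0 ≤ f ∧ e + f ≤ ξ ^ 2 * Y / Δy ^ 2 + |w| / Δy := by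
  have hhalf : 0 ≤ if j ≠ top then ξ ^ 2 * Y / (2 * Δy ^ 2) else 0 := by
    split_ifs <;> positivity
  have hfull : 0 ≤ if j = top then ξ ^ 2 * Y / Δy ^ 2 else 0 := by
    split_ifs <;> positivity
  have hdiff : (if j ≠ top then ξ ^ 2 * Y / (2 * Δy ^ 2) else 0)
      + (if j = top then ξ ^ 2 * Y / Δy ^ 2 else 0)
      + (if j ≠ top then ξ ^ 2 * Y / (2 * Δy ^ 2) else 0) = ξ ^ 2 * Y / Δy ^ 2 := by
    by_cases htop : j = top
    · simp [htop]
    · simp only [ne_eq, htop, not_false_eq_true, if_true, if_false]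
      ring
  have hneg := ite_div_nonpos_of_neg (z := w) (q := w < 0 ∧ 0 < j ∧ j < top) hΔy.le And.left
  have hpos := ite_div_nonneg_of_pos (z := w) (p := 0 < w ∧ j ≠ top) hΔy.le And.left
  have hsplit := ite_div_sub_ite_div_le_abs_div (z := w) (p := 0 < w ∧ j ≠ top)
    (q := w < 0 ∧ 0 < j ∧ j < top) hΔy.le And.left And.left
  exact ⟨by linarith, by linarith, by linarith⟩

theorem stmt_12_general
    (Δx Δy Δt k θ κ μ ξ lam : ℝ)
    (hΔx : 0 < Δx) (hΔy : 0 < Δy) (hΔt : 0 < Δt) (hlam : 0 < lam)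
    (J N V : ℕ)
    (fbar : ℤ → ℝ)
    (hfbar : ∀ i ∈ Finset.Icc (-(J / 2 : ℤ)) (J / 2 : ℤ), 0 ≤ fbar i)
    (Ihat : ℝ) (hIhat : Ihat = ∑ i ∈ Finset.Icc (-(J / 2 : ℤ)) (J / 2 : ℤ), fbar i * Δx)
    (P S : Finset ℤ)
    (hP : P = Finset.Icc 0 ((N : ℤ) - 1))
    (hS : S ⊆ Finset.Icc 1 ((N : ℤ) - 2))
    (hSP : ∀ p ∈ S, ∀ i ∈ Finset.Icc (-(J / 2 : ℤ)) (J / 2 : ℤ), p + i ∈ P)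
    (x : ℤ → ℝ)
    (y : ℤ → ℝ) (hy : ∀ j, y j = (j : ℝ) * Δy)
    (Vset : Finset ℤ) (hV' : Vset = Finset.Icc 0 ((V : ℤ) - 1))
    (c a b e f : ℤ → ℤ → ℝ)
    (hc : ∀ p j, c p j = y j / (2 * Δx ^ 2)
        - (if k * (θ - x p) < 0 then k * (θ - x p) / Δx else 0))
    (ha : ∀ p j, a p j = y j / Δx ^ 2 + ξ ^ 2 * y j / Δy ^ 2
        + |k * (θ - x p)| / Δx + |κ * (μ - y j)| / Δy)
    (hb : ∀ p j, b p j = y j / (2 * Δx ^ 2)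
        + (if 0 < k * (θ - x p) then k * (θ - x p) / Δx else 0))
    (he : ∀ p j, e p j = (if j ≠ (V : ℤ) - 1 then ξ ^ 2 * y j / (2 * Δy ^ 2) else 0)
        + (if j = (V : ℤ) - 1 then ξ ^ 2 * y j / Δy ^ 2 else 0)
        - (if κ * (μ - y j) < 0 ∧ 0 < j ∧ j < (V : ℤ) - 1
            then κ * (μ - y j) / Δy else 0))
    (hf : ∀ p j, f p j = (if j ≠ (V : ℤ) - 1 then ξ ^ 2 * y j / (2 * Δy ^ 2) else 0)
        + (if 0 < κ * (μ - y j) ∧ j ≠ (V : ℤ) - 1 then κ * (μ - y j) / Δy else 0))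
    (Tmax : ℕ) (Φ : ℕ → ℤ → ℤ → ℝ)
    -- the stochastic-volatility scheme, interior rows
    (hscheme : ∀ q < Tmax, ∀ p ∈ S, ∀ j ∈ Vset,
      -(c p j) * Δt * Φ (q + 1) (p - 1) j + (1 + a p j * Δt) * Φ (q + 1) p j
          - b p j * Δt * Φ (q + 1) (p + 1) j
          - e p j * Δt * Φ (q + 1) p (j - 1)
          - f p j * Δt * Φ (q + 1) p (j + 1)
        = (1 - lam * Δt * Ihat) * Φ q p j
          + lam * Δt *
            ∑ i ∈ Finset.Icc (-(J / 2 : ℤ)) (J / 2 : ℤ), Φ q (p + i) j * fbar i * Δx)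
    -- Dirichlet boundary rows
    (hbdry : ∀ q < Tmax, ∀ p ∈ P \ S, ∀ j ∈ Vset, Φ (q + 1) p j = Φ q p j)
    -- temporal mesh condition (no condition on Δx, Δy)
    (hmesh : lam * Δt * Ihat ≤ 1) :
    ∀ q ≤ Tmax, ∀ M : ℝ, (∀ p ∈ P, ∀ j ∈ Vset, |Φ 0 p j| ≤ M) →
      ∀ p ∈ P, ∀ j ∈ Vset, |Φ q p j| ≤ M := by
  subst hIhat hP hV'
  have hy₀ : ∀ j ∈ Icc 0 ((V : ℤ) - 1), 0 ≤ y j := fun j hj => by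
    rw [hy]
    exact mul_nonneg (by exact_mod_cast (mem_Icc.1 hj).1) hΔy.le
  have hxc p j (hj : j ∈ Icc 0 ((V : ℤ) - 1)) :=
    upwind_x_coeffs_nonneg_sum_le hΔx (hy₀ j hj) (hc p j) (hb p j)
  have hyc p j (hj : j ∈ Icc 0 ((V : ℤ) - 1)) :=
    upwind_y_coeffs_nonneg_sum_le hΔy (hy₀ j hj) (he p j) (hf p j)
  intro q hq M h0
  induction q with
  | zero => exact h0
  | succ q ih =>
    exact abs_le_of_upwind_step (a := a) hΔt.le hlam.le (fun i hi => mul_nonneg (hfbar i hi) hΔx.le)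
      hmesh hSP (fun p hp => by have := mem_Icc.1 (hS hp); simp only [mem_Icc]; omega)
      (fun p _ j hj => (hxc p j hj).1) (fun p _ j hj => (hxc p j hj).2.1)
      (fun p _ j hj => (hyc p j hj).1) (fun p _ j hj => (hyc p j hj).2.1)
      (fun p _ j hj => by linarith [ha p j, (hxc p j hj).2.2, (hyc p j hj).2.2])
      (fun p _ j hj hj' => by
        obtain rfl : j = 0 := by simp only [mem_Icc] at hj hj'; omega
        simp [he, hy])
      (fun p _ j hj hj' => by
        obtain rfl : j = (V : ℤ) - 1 := by simp only [mem_Icc] at hj hj'; omega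
        simp [hf])
      (fun p hp j hj => by simpa only [mul_assoc] using hscheme q hq p hp j hj) (hbdry q hq)
      (ih (by omega))

/-- Unconditional stability of the upwinded implicit scheme for the
stochastic-volatility Lévy-driven OU PIDE: assuming only `λ·Δt·Î ≤ 1` (no condition on
the spatial mesh sizes `Δx`, `Δy`), every solution of the scheme satisfies
`max_{p,j} |Φ^q_{p,j}| ≤ max_{p,j} |Φ^0_{p,j}|` for every `q = 0, …, Tmax`. -/
theorem stmt_12
    (Δx Δy Δt k θ κ μ ξ lam x₀ : ℝ)
    (hΔx : 0 < Δx) (hΔy : 0 < Δy) (hΔt : 0 < Δt) (hξ : 0 < ξ) (hlam : 0 < lam)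
    (J N V : ℕ) (hJ : Even J) (hV : 2 ≤ V)
    (fbar : ℤ → ℝ)
    (hfbar : ∀ i ∈ Finset.Icc (-(J / 2 : ℤ)) (J / 2 : ℤ), 0 ≤ fbar i)
    (Ihat : ℝ) (hIhat : Ihat = ∑ i ∈ Finset.Icc (-(J / 2 : ℤ)) (J / 2 : ℤ), fbar i * Δx)
    (P S : Finset ℤ)
    (hP : P = Finset.Icc 0 ((N : ℤ) - 1))
    (hS : S ⊆ Finset.Icc 1 ((N : ℤ) - 2))
    (hSP : ∀ p ∈ S, ∀ i ∈ Finset.Icc (-(J / 2 : ℤ)) (J / 2 : ℤ), p + i ∈ P)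
    (x : ℤ → ℝ) (hx : ∀ p, x p = x₀ + (p : ℝ) * Δx)
    (y : ℤ → ℝ) (hy : ∀ j, y j = (j : ℝ) * Δy)
    (Vset : Finset ℤ) (hV' : Vset = Finset.Icc 0 ((V : ℤ) - 1))
    (c a b e f : ℤ → ℤ → ℝ)
    (hc : ∀ p j, c p j = y j / (2 * Δx ^ 2)
        - (if k * (θ - x p) < 0 then k * (θ - x p) / Δx else 0))
    (ha : ∀ p j, a p j = y j / Δx ^ 2 + ξ ^ 2 * y j / Δy ^ 2
        + |k * (θ - x p)| / Δx + |κ * (μ - y j)| / Δy)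
    (hb : ∀ p j, b p j = y j / (2 * Δx ^ 2)
        + (if 0 < k * (θ - x p) then k * (θ - x p) / Δx else 0))
    (he : ∀ p j, e p j = (if j ≠ (V : ℤ) - 1 then ξ ^ 2 * y j / (2 * Δy ^ 2) else 0)
        + (if j = (V : ℤ) - 1 then ξ ^ 2 * y j / Δy ^ 2 else 0)
        - (if κ * (μ - y j) < 0 ∧ 0 < j ∧ j < (V : ℤ) - 1
            then κ * (μ - y j) / Δy else 0))
    (hf : ∀ p j, f p j = (if j ≠ (V : ℤ) - 1 then ξ ^ 2 * y j / (2 * Δy ^ 2) else 0)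
        + (if 0 < κ * (μ - y j) ∧ j ≠ (V : ℤ) - 1 then κ * (μ - y j) / Δy else 0))
    (Tmax : ℕ) (Φ : ℕ → ℤ → ℤ → ℝ)
    -- the stochastic-volatility scheme, interior rows
    (hscheme : ∀ q < Tmax, ∀ p ∈ S, ∀ j ∈ Vset,
      -(c p j) * Δt * Φ (q + 1) (p - 1) j + (1 + a p j * Δt) * Φ (q + 1) p j
          - b p j * Δt * Φ (q + 1) (p + 1) j
          - e p j * Δt * Φ (q + 1) p (j - 1)
          - f p j * Δt * Φ (q + 1) p (j + 1)
        = (1 - lam * Δt * Ihat) * Φ q p j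
          + lam * Δt *
            ∑ i ∈ Finset.Icc (-(J / 2 : ℤ)) (J / 2 : ℤ), Φ q (p + i) j * fbar i * Δx)
    -- Dirichlet boundary rows
    (hbdry : ∀ q < Tmax, ∀ p ∈ P \ S, ∀ j ∈ Vset, Φ (q + 1) p j = Φ q p j)
    -- temporal mesh condition (no condition on Δx, Δy)
    (hmesh : lam * Δt * Ihat ≤ 1) :
    ∀ q ≤ Tmax, ∀ M : ℝ, (∀ p ∈ P, ∀ j ∈ Vset, |Φ 0 p j| ≤ M) →
      ∀ p ∈ P, ∀ j ∈ Vset, |Φ q p j| ≤ M :=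
  stmt_12_general Δx Δy Δt k θ κ μ ξ lam hΔx hΔy hΔt hlam J N V fbar hfbar Ihat hIhat P S hP hS hSP
    x y hy Vset hV' c a b e f hc ha hb he hf Tmax Φ hscheme hbdry hmesh
end
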